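/- Let n₁, n₂ ≥ 1, with the bipartite blocks of K_{n₁,n₂} indexed by {1,…,n₁} and {1,…,n₂}. Encode an orientation of K_{n₁,n₂} by the n₁×n₂ zero-one matrix M whose (i,j) entry is 1 if the edge between vertex i of the first block and vertex j of the second block is oriented from the first block to the second, and 0 otherwise. Then the orientation is acyclic if and only if M contains neither [[1,0],[0,1]] nor [[0,1],[1,0]] as a (not necessarily consecutive) 2×2 submatrix. -/
import Mathlib


/-- An orientation of a simple graph `G`, encoded as a function `f` where `f u v = true`
means the edge `{u,v}` is directed from `u` to `v`. Every edge gets exactly one direction,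
and non-edges carry no direction. -/
def IsOrientation {V : Type*} (G : SimpleGraph V) (f : V → V → Bool) : Prop :=
  (∀ u v, G.Adj u v → f u v = !f v u) ∧ ∀ u v, ¬ G.Adj u v → f u v = false

/-- The directed graph given by `f` contains no directed cycle. -/
def OrientAcyclic {V : Type*} (f : V → V → Bool) : Prop :=
  ∀ v, ¬ Relation.TransGen (fun a b => f a b = true) v v

/-- The number of acyclic orientations of `G`. -/
noncomputable def numAcyclicOrientations {V : Type*} (G : SimpleGraph V) : ℕ :=
  Nat.card {f : V → V → Bool // IsOrientation G f ∧ OrientAcyclic f}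

/-- The Stirling number of the second kind `S(n,k)`: the number of partitions of an
`n`-element set into `k` non-empty parts. -/
noncomputable def stirling2 (n k : ℕ) : ℕ :=
  Nat.card {P : Finpartition (Finset.univ : Finset (Fin n)) // P.parts.card = k}

/-- `M` contains `[[1,0],[0,1]]` or `[[0,1],[1,0]]` as a (not necessarily consecutive)
`2×2` submatrix. -/
def HasForbiddenSubmatrix {m n : ℕ} (M : Fin m → Fin n → Bool) : Prop :=
  ∃ i₁ i₂ : Fin m, ∃ j₁ j₂ : Fin n, i₁ < i₂ ∧ j₁ < j₂ ∧
    ((M i₁ j₁ = true ∧ M i₁ j₂ = false ∧ M i₂ j₁ = false ∧ M i₂ j₂ = true) ∨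
      (M i₁ j₁ = false ∧ M i₁ j₂ = true ∧ M i₂ j₁ = true ∧ M i₂ j₂ = false))


/-- The orientation of the complete bipartite graph encoded by the zero-one matrix `M`:
the edge between left vertex `i` and right vertex `j` is directed from left to right
exactly when `M i j = true`. -/
def orientOfMatrix {m n : ℕ} (M : Fin m → Fin n → Bool) :
    (Fin m ⊕ Fin n) → (Fin m ⊕ Fin n) → Bool
  | Sum.inl i, Sum.inr j => M i j
  | Sum.inr j, Sum.inl i => !M i j
  | _, _ => false

/-- The orientation of `K_{n₁,n₂}` encoded by the zero-one matrix `M` is acyclic if and only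
if `M` contains neither `[[1,0],[0,1]]` nor `[[0,1],[1,0]]` as a `2×2` submatrix. -/
theorem orient_acyclic_iff_no_forbidden_submatrix (n₁ n₂ : ℕ) (h₁ : 1 ≤ n₁) (h₂ : 1 ≤ n₂)
    (M : Fin n₁ → Fin n₂ → Bool) :
    OrientAcyclic (orientOfMatrix M) ↔ ¬ HasForbiddenSubmatrix M := by
  constructor
  · intro hac hsub
    obtain ⟨i₁, i₂, j₁, j₂, hi, hj, h⟩ := hsub
    rcases h with ⟨a, b, c, d⟩ | ⟨a, b, c, d⟩
    · have e1 : orientOfMatrix M (Sum.inl i₁) (Sum.inr j₁) = true := by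
        simp [orientOfMatrix, a]
      have e2 : orientOfMatrix M (Sum.inr j₁) (Sum.inl i₂) = true := by
        simp [orientOfMatrix, c]
      have e3 : orientOfMatrix M (Sum.inl i₂) (Sum.inr j₂) = true := by
        simp [orientOfMatrix, d]
      have e4 : orientOfMatrix M (Sum.inr j₂) (Sum.inl i₁) = true := by
        simp [orientOfMatrix, b]
      exact hac (Sum.inl i₁)
        ((((Relation.TransGen.single (r := fun a b => orientOfMatrix M a b = true)
          e1).tail e2).tail e3).tail e4)
    · have e1 : orientOfMatrix M (Sum.inl i₁) (Sum.inr j₂) = true := by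
        simp [orientOfMatrix, b]
      have e2 : orientOfMatrix M (Sum.inr j₂) (Sum.inl i₂) = true := by
        simp [orientOfMatrix, d]
      have e3 : orientOfMatrix M (Sum.inl i₂) (Sum.inr j₁) = true := by
        simp [orientOfMatrix, c]
      have e4 : orientOfMatrix M (Sum.inr j₁) (Sum.inl i₁) = true := by
        simp [orientOfMatrix, a]
      exact hac (Sum.inl i₁)
        ((((Relation.TransGen.single (r := fun a b => orientOfMatrix M a b = true)
          e1).tail e2).tail e3).tail e4)
  · intro hsub
    -- quadruple-freeness, without order constraints
    have key : ∀ i₁ i₂ : Fin n₁, ∀ j₁ j₂ : Fin n₂, M i₁ j₁ = true → M i₁ j₂ = false →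
        M i₂ j₁ = false → M i₂ j₂ = true → False := by
      intro i₁ i₂ j₁ j₂ a b c d
      have hi : i₁ ≠ i₂ := by rintro rfl; rw [a] at c; simp at c
      have hj : j₁ ≠ j₂ := by rintro rfl; rw [a] at b; simp at b
      rcases hi.lt_or_gt with hi' | hi' <;> rcases hj.lt_or_gt with hj' | hj'
      · exact hsub ⟨i₁, i₂, j₁, j₂, hi', hj', Or.inl ⟨a, b, c, d⟩⟩
      · exact hsub ⟨i₁, i₂, j₂, j₁, hi', hj', Or.inr ⟨b, a, d, c⟩⟩
      · exact hsub ⟨i₂, i₁, j₁, j₂, hi', hj', Or.inr ⟨c, d, a, b⟩⟩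
      · exact hsub ⟨i₂, i₁, j₂, j₁, hi', hj', Or.inl ⟨d, c, b, a⟩⟩
    -- potential function
    set R : Fin n₁ → ℕ := fun i => (Finset.univ.filter (fun j => M i j = true)).card with hR
    set g : Fin n₂ → ℕ := fun j => (Finset.univ.filter (fun i => M i j = false)).sup R with hg
    set f : (Fin n₁ ⊕ Fin n₂) → ℕ := fun v =>
      match v with
      | Sum.inl i => 2 * R i
      | Sum.inr j => 2 * g j + 1 with hf
    have step : ∀ a b, orientOfMatrix M a b = true → f b < f a := by
      rintro (i | j) (i' | j') hab <;> simp only [orientOfMatrix] at hab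
      · exact absurd hab (by simp)
      · -- inl i → inr j': M i j' = true
        have hlt : g j' < R i := by
          have hpos : 0 < R i :=
            Finset.card_pos.2 ⟨j', by simp [hab]⟩
          refine Finset.sup_lt_iff hpos |>.2 ?_
          intro i' hi'
          simp only [Finset.mem_filter] at hi'
          have hsubset : (Finset.univ.filter (fun j => M i' j = true)) ⊂
              (Finset.univ.filter (fun j => M i j = true)) := by
            constructor
            · intro j hj
              simp only [Finset.mem_filter, Finset.mem_univ, true_and] at hj ⊢
              by_contra hcon
              exact key i' i j j' hj (hi'.2) (by simpa using hcon) hab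
            · intro hcon
              have := hcon (Finset.mem_filter.2 ⟨Finset.mem_univ _, hab⟩)
              simp only [Finset.mem_filter] at this
              rw [this.2] at hi'
              simp at hi' 
          exact Finset.card_lt_card hsubset
        simpa [hf] using by omega
      · -- inr j → inl i': M i' j = false
        have hmem : M i' j = false := by simpa using hab
        have hle : R i' ≤ g j :=
          Finset.le_sup (Finset.mem_filter.2 ⟨Finset.mem_univ _, hmem⟩)
        simpa [hf] using by omega
      · exact absurd hab (by simp)
    intro v hv
    have mono : ∀ a b, Relation.TransGen (fun a b => orientOfMatrix M a b = true) a b →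
        f b < f a := by
      intro a b h
      induction h with
      | single hr => exact step _ _ hr
      | tail _ hr ih => exact lt_trans (step _ _ hr) ih
    exact lt_irrefl _ (mono v v hv)
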